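/- Let {𝒜₀ = I, 𝒜₁, 𝒜₂, 𝒜₃} be an orthonormal basis of the real Hilbert space of 2×2 Hermitian matrices with inner product ⟨P,Q⟩ = tr(P*Q)/2, with 𝒜₀ the identity. Then for all 1 ≤ i < j ≤ 3, the basis elements anticommute: 𝒜ᵢ𝒜ⱼ + 𝒜ⱼ𝒜ᵢ = 0. -/
import Mathlib


open Matrix

/-- A standard orthonormal basis of the 2×2 Hermitian matrices: each element is Hermitian,
the family is orthonormal for the normalized Hilbert–Schmidt inner product
`⟨P,Q⟩ = tr(Pᴴ Q)/2`, and the 0-th element is the identity. -/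
structure StdONB2 (𝒜 : Fin 4 → Matrix (Fin 2) (Fin 2) ℂ) : Prop where
  herm : ∀ i, (𝒜 i).IsHermitian
  first : 𝒜 0 = 1
  ortho : ∀ i j, ((𝒜 i)ᴴ * 𝒜 j).trace / 2 = if i = j then 1 else 0

lemma anticomm_of_traceless (A B : Matrix (Fin 2) (Fin 2) ℂ)
    (hA : A.trace = 0) (hB : B.trace = 0) (hAB : (A * B).trace = 0) :
    A * B + B * A = 0 := by
  rw [Matrix.trace_fin_two] at hA hB
  rw [Matrix.trace_fin_two] at hAB
  simp only [Matrix.mul_apply, Fin.sum_univ_two] at hAB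
  ext i j
  fin_cases i <;> fin_cases j <;>
    simp only [Matrix.add_apply, Matrix.mul_apply, Fin.sum_univ_two, Matrix.zero_apply,
      Fin.isValue, Fin.zero_eta, Fin.mk_one]
  · linear_combination hAB + B 0 0 * hA - A 1 1 * hB
  · linear_combination B 0 1 * hA + A 0 1 * hB
  · linear_combination B 1 0 * hA + A 1 0 * hB
  · linear_combination hAB + B 1 1 * hA - A 0 0 * hB

/-- For any standard orthonormal basis `{𝒜₀ = I, 𝒜₁, 𝒜₂, 𝒜₃}` of the 2×2
Hermitian matrices, the non-identity elements pairwise anticommute. -/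
theorem stmt8 (𝒜 : Fin 4 → Matrix (Fin 2) (Fin 2) ℂ) (h : StdONB2 𝒜) :
    ∀ i j : Fin 4, 1 ≤ i → i < j → 𝒜 i * 𝒜 j + 𝒜 j * 𝒜 i = 0 := by
  intro i j hi hij
  have tr0 : ∀ k : Fin 4, k ≠ 0 → (𝒜 k).trace = 0 := by
    intro k hk
    have := h.ortho 0 k
    rw [if_neg (by exact fun e => hk e.symm), h.first] at this
    simpa [div_eq_zero_iff] using this
  have trAB : (𝒜 i * 𝒜 j).trace = 0 := by
    have := h.ortho i j
    rw [if_neg (by exact Fin.ne_of_lt hij), (h.herm i).eq] at this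
    simpa [div_eq_zero_iff] using this
  exact anticomm_of_traceless _ _ (tr0 i (by omega)) (tr0 j (by omega)) trAB
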